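/- arXiv:1203.2677 — 2 statements merged into one kernel-verified Lean document; each statement's English description precedes it below -/
import Mathlib

section
/- Let f, g : ℝ² → ℝ be smooth positive functions satisfying the two bilinear equations −(f_{x₁x₋₁} f − f_{x₁} f_{x₋₁}) + f² = f g and −(g_{x₁x₋₁} g − g_{x₁} g_{x₋₁}) + g² = f². Then ρ = f/g satisfies the Tzitzeica-type equation −(log ρ)_{x₁x₋₁} = 1/ρ − ρ². -/
/-- Partial derivative with respect to the first variable. -/
noncomputable def pd1 (f : ℝ → ℝ → ℝ) : ℝ → ℝ → ℝ :=
  fun x y => deriv (fun s => f s y) x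

/-- Partial derivative with respect to the second variable. -/
noncomputable def pd2 (f : ℝ → ℝ → ℝ) : ℝ → ℝ → ℝ :=
  fun x y => deriv (fun s => f x s) y

lemma diff_fst (f : ℝ → ℝ → ℝ) (hf : ContDiff ℝ (⊤ : ℕ∞) (fun p : ℝ × ℝ => f p.1 p.2))
    (x y : ℝ) : DifferentiableAt ℝ (fun s => f s y) x :=
  by have h := ((hf.differentiable (by simp) (x, y)).comp x
      ((differentiableAt_fun_id (𝕜 := ℝ) (x := x)).prodMk (differentiableAt_const y))); exact h

lemma diff_snd (f : ℝ → ℝ → ℝ) (hf : ContDiff ℝ (⊤ : ℕ∞) (fun p : ℝ × ℝ => f p.1 p.2))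
    (x y : ℝ) : DifferentiableAt ℝ (fun t => f x t) y :=
  ((hf.differentiable (by simp) (x, y)).comp y
    ((differentiableAt_const x).prodMk (differentiableAt_fun_id)))

lemma pd1_fderiv (f : ℝ → ℝ → ℝ) (hf : ContDiff ℝ (⊤ : ℕ∞) (fun p : ℝ × ℝ => f p.1 p.2))
    (x y : ℝ) :
    pd1 f x y = fderiv ℝ (fun p : ℝ × ℝ => f p.1 p.2) (x, y) (1, 0) := by
  have h1 : HasDerivAt (fun s => f s y)
      (fderiv ℝ (fun p : ℝ × ℝ => f p.1 p.2) (x, y) (1, 0)) x :=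
    by have h := ((hf.differentiable (by simp) (x, y)).hasFDerivAt.comp_hasDerivAt x
        ((hasDerivAt_id' (x := x)).prodMk (hasDerivAt_const x y))); exact h
  exact h1.deriv.symm ▸ rfl

lemma diff_pd1_snd (f : ℝ → ℝ → ℝ) (hf : ContDiff ℝ (⊤ : ℕ∞) (fun p : ℝ × ℝ => f p.1 p.2))
    (x y : ℝ) : DifferentiableAt ℝ (fun t => pd1 f x t) y := by
  have heq : (fun t => pd1 f x t)
      = fun t => fderiv ℝ (fun p : ℝ × ℝ => f p.1 p.2) (x, t) (1, 0) :=
    funext fun t => pd1_fderiv f hf x t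
  rw [heq]
  have hD : ContDiff ℝ (⊤ : ℕ∞) (fun p : ℝ × ℝ => fderiv ℝ (fun p : ℝ × ℝ => f p.1 p.2) p (1, 0)) :=
    (hf.fderiv_right (by simp)).clm_apply contDiff_const
  exact ((hD.differentiable (by simp)) (x, y)).comp y
    ((differentiableAt_const x).prodMk (differentiableAt_fun_id))

/-- ρ = f/g satisfies the Tzitzeica-type equation. -/
theorem stmt_8 (f g : ℝ → ℝ → ℝ)
    (hf : ContDiff ℝ (⊤ : ℕ∞) (fun p : ℝ × ℝ => f p.1 p.2))
    (hg : ContDiff ℝ (⊤ : ℕ∞) (fun p : ℝ × ℝ => g p.1 p.2))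
    (hfpos : ∀ x y, 0 < f x y) (hgpos : ∀ x y, 0 < g x y)
    (hbil1 : ∀ x y,
      -(pd2 (pd1 f) x y * f x y - pd1 f x y * pd2 f x y) + (f x y) ^ 2 =
        f x y * g x y)
    (hbil2 : ∀ x y,
      -(pd2 (pd1 g) x y * g x y - pd1 g x y * pd2 g x y) + (g x y) ^ 2 =
        (f x y) ^ 2) :
    ∀ x y,
      -(pd2 (pd1 fun a b => Real.log (f a b / g a b)) x y) =
        1 / (f x y / g x y) - (f x y / g x y) ^ 2 := by
  intro x y
  have hfne : ∀ a b, f a b ≠ 0 := fun a b => (hfpos a b).ne'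
  have hgne : ∀ a b, g a b ≠ 0 := fun a b => (hgpos a b).ne'
  -- step 1: pd1 of log(f/g) equals pd1 f / f - pd1 g / g
  have hpd1log : ∀ a b, pd1 (fun a b => Real.log (f a b / g a b)) a b
      = pd1 f a b / f a b - pd1 g a b / g a b := by
    intro a b
    have hdf : HasDerivAt (fun s => f s b) (pd1 f a b) a := (diff_fst f hf a b).hasDerivAt
    have hdg : HasDerivAt (fun s => g s b) (pd1 g a b) a := (diff_fst g hg a b).hasDerivAt
    have h1 : HasDerivAt (fun s => Real.log (f s b) - Real.log (g s b))
        (pd1 f a b / f a b - pd1 g a b / g a b) a :=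
      (hdf.log (hfne a b)).sub (hdg.log (hgne a b))
    have heq : (fun s => Real.log (f s b / g s b))
        = fun s => Real.log (f s b) - Real.log (g s b) :=
      funext fun s => Real.log_div (hfne s b) (hgne s b)
    show deriv (fun s => Real.log (f s b / g s b)) a = _
    rw [heq]
    exact h1.deriv
  -- step 2: differentiate in second variable
  have hdp1f : HasDerivAt (fun t => pd1 f x t) (pd2 (pd1 f) x y) y :=
    (diff_pd1_snd f hf x y).hasDerivAt
  have hdp1g : HasDerivAt (fun t => pd1 g x t) (pd2 (pd1 g) x y) y :=
    (diff_pd1_snd g hg x y).hasDerivAt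
  have hdf2 : HasDerivAt (fun t => f x t) (pd2 f x y) y := (diff_snd f hf x y).hasDerivAt
  have hdg2 : HasDerivAt (fun t => g x t) (pd2 g x y) y := (diff_snd g hg x y).hasDerivAt
  have hA : HasDerivAt (fun t => pd1 f x t / f x t - pd1 g x t / g x t)
      ((pd2 (pd1 f) x y * f x y - pd1 f x y * pd2 f x y) / (f x y) ^ 2
        - (pd2 (pd1 g) x y * g x y - pd1 g x y * pd2 g x y) / (g x y) ^ 2) y :=
    (hdp1f.div hdf2 (hfne x y)).sub (hdp1g.div hdg2 (hgne x y))
  have hkey : pd2 (pd1 fun a b => Real.log (f a b / g a b)) x y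
      = (pd2 (pd1 f) x y * f x y - pd1 f x y * pd2 f x y) / (f x y) ^ 2
        - (pd2 (pd1 g) x y * g x y - pd1 g x y * pd2 g x y) / (g x y) ^ 2 := by
    have heq : (fun t => pd1 (fun a b => Real.log (f a b / g a b)) x t)
        = fun t => pd1 f x t / f x t - pd1 g x t / g x t :=
      funext fun t => hpd1log x t
    show deriv (fun t => pd1 (fun a b => Real.log (f a b / g a b)) x t) y = _
    rw [heq]
    exact hA.deriv
  rw [hkey]
  have h1 := hbil1 x y
  have h2 := hbil2 x y
  have hf0 := hfne x y
  have hg0 := hgne x y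
  have e1 : pd2 (pd1 f) x y * f x y - pd1 f x y * pd2 f x y
      = (f x y) ^ 2 - f x y * g x y := by linarith
  have e2 : pd2 (pd1 g) x y * g x y - pd1 g x y * pd2 g x y
      = (g x y) ^ 2 - (f x y) ^ 2 := by linarith
  rw [e1, e2]
  field_simp
  ring
end

section
/- Let p₁, p₂ ∈ ℂ with p₁ + p₂ ≠ 0 and p₁² − p₁p₂ + p₂² = 0, and set k = p₁ + p₂ (k ≠ 0). Define τ(x₁, x₋₁) = 1 + e^{k x₁ + (3/k) x₋₁ + η₀} for a constant η₀, assuming all quantities real with k real nonzero. Then τ satisfies the bilinear equation (D_{x₋₁} D_{x₁}³ − 3 D_{x₁}²) τ·τ = 0. -/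
/-!
With `E = exp (k x + ω y + η₀)` every derivative of `τ = 1 + E` is a multiple of `E`, so the
Hirota expression is a polynomial in `E`. The `E²` terms cancel and what is left is
`2 k² (k ω - 3) E`, which vanishes exactly on the dispersion relation `ω = 3 / k`.
-/

noncomputable section

def expWave (m n a b c : ℝ) : ℝ → ℝ → ℝ :=
  fun x y => m + n * Real.exp (a * x + b * y + c)

/-- `(D_{x₋₁} D_{x₁}³ − 3 D_{x₁}²) τ·τ`, written out in ordinary partial derivatives. -/
def ostrovskyBilinear (τ : ℝ → ℝ → ℝ) (x y : ℝ) : ℝ :=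
  2 * (pd2 (pd1 (pd1 (pd1 τ))) x y * τ x y
        - 3 * pd2 (pd1 (pd1 τ)) x y * pd1 τ x y
        + 3 * pd2 (pd1 τ) x y * pd1 (pd1 τ) x y
        - pd2 τ x y * pd1 (pd1 (pd1 τ)) x y)
    - 3 * (2 * (pd1 (pd1 τ) x y * τ x y - (pd1 τ x y) ^ 2))

end

section expWave

variable (m n a b c : ℝ)

theorem pd1_expWave : pd1 (expWave m n a b c) = expWave 0 (n * a) a b c := by
  funext x y
  have h : HasDerivAt (fun s => a * s + b * y + c) a x := by
    simpa using (((hasDerivAt_id x).const_mul a).add_const (b * y)).add_const c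
  simp only [pd1, expWave]
  rw [((h.exp.const_mul n).const_add m).deriv]
  ring

theorem pd2_expWave : pd2 (expWave m n a b c) = expWave 0 (n * b) a b c := by
  funext x y
  have h : HasDerivAt (fun s => a * x + b * s + c) b y := by
    simpa using (((hasDerivAt_id y).const_mul b).const_add (a * x)).add_const c
  simp only [pd2, expWave]
  rw [((h.exp.const_mul n).const_add m).deriv]
  ring

theorem ostrovskyBilinear_one_add_expWave (x y : ℝ) :
    ostrovskyBilinear (expWave 1 1 a b c) x y
      = 2 * a ^ 2 * (a * b - 3) * Real.exp (a * x + b * y + c) := by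
  simp only [ostrovskyBilinear, pd1_expWave, pd2_expWave, expWave]
  ring

end expWave

theorem stmt_14_general
    (k : ℝ) (hk0 : k ≠ 0)
    (η₀ : ℝ) (τ : ℝ → ℝ → ℝ)
    (hτ : τ = fun x y => 1 + Real.exp (k * x + (3 / k) * y + η₀)) :
    ∀ x y,
      2 * (pd2 (pd1 (pd1 (pd1 τ))) x y * τ x y
            - 3 * pd2 (pd1 (pd1 τ)) x y * pd1 τ x y
            + 3 * pd2 (pd1 τ) x y * pd1 (pd1 τ) x y
            - pd2 τ x y * pd1 (pd1 (pd1 τ)) x y)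
        - 3 * (2 * (pd1 (pd1 τ) x y * τ x y - (pd1 τ x y) ^ 2)) = 0 := by
  have hτ_wave : τ = expWave 1 1 k (3 / k) η₀ := by
    rw [hτ]; funext x y; simp [expWave]
  intro x y
  change ostrovskyBilinear τ x y = 0
  rw [hτ_wave, ostrovskyBilinear_one_add_expWave, mul_div_cancel₀ _ hk0]
  ring

/-- one-soliton τ-function of the reduced Ostrovsky equation. -/
theorem stmt_14 (p q : ℂ) (hpq : p + q ≠ 0)
    (hcon : p ^ 2 - p * q + q ^ 2 = 0)
    (k : ℝ) (hk : (k : ℂ) = p + q) (hk0 : k ≠ 0)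
    (η₀ : ℝ) (τ : ℝ → ℝ → ℝ)
    (hτ : τ = fun x y => 1 + Real.exp (k * x + (3 / k) * y + η₀)) :
    ∀ x y,
      2 * (pd2 (pd1 (pd1 (pd1 τ))) x y * τ x y
            - 3 * pd2 (pd1 (pd1 τ)) x y * pd1 τ x y
            + 3 * pd2 (pd1 τ) x y * pd1 (pd1 τ) x y
            - pd2 τ x y * pd1 (pd1 (pd1 τ)) x y)
        - 3 * (2 * (pd1 (pd1 τ) x y * τ x y - (pd1 τ x y) ^ 2)) = 0 :=
  stmt_14_general k hk0 η₀ τ hτ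
end
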